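/- Let b₁, b₂ ∈ ℂ be nonzero, let i denote the imaginary unit, and set c = i. Define Q(x,y) = c²x⁴(y−1)² + 2b₁cx²(cxy−cx+y+b₂y²(xy−x−y)) + b₁²(c²x² + 2cxy(b₂y−1) + (y+b₂y²(x−1))²). Then for all (x,y) ∈ ℂ² with x ≠ 0, y ≠ 0 and Q defined, one has Q(b₁/x, 1/(b₂y)) / ((b₁/x)²(1/(b₂y))²) = − Q(x,y)/(x²y²); i.e., when c = i the automorphism σ: (x,y) ↦ (b₁/x, 1/(b₂y)) maps the fibration parameter k₁/k₀ of the pencil k₀x²y² + k₁Q(x,y) = 0 (the linear system |−2K_X| when q = −1) to −k₁/k₀. -/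
import Mathlib


open Complex

set_option maxHeartbeats 4000000

/-- The degree-(4,4) polynomial `Q` defining the linear system `|−2K_X|`
    (at `c = i`) for the family of generalized Halphen surfaces of type
    `A₅⁽¹⁾` with `q = −1`. -/
noncomputable def Qii2 (b₁ b₂ c x y : ℂ) : ℂ :=
  c ^ 2 * x ^ 4 * (y - 1) ^ 2 +
    2 * b₁ * c * x ^ 2 *
      (c * x * y - c * x + y + b₂ * y ^ 2 * (x * y - x - y)) +
    b₁ ^ 2 * (c ^ 2 * x ^ 2 + 2 * c * x * y * (b₂ * y - 1) +
      (y + b₂ * y ^ 2 * (x - 1)) ^ 2)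

theorem stmt_18 (b₁ b₂ x y : ℂ) (hb₁ : b₁ ≠ 0) (hb₂ : b₂ ≠ 0)
    (hx : x ≠ 0) (hy : y ≠ 0) :
    Qii2 b₁ b₂ Complex.I (b₁ / x) (1 / (b₂ * y)) /
        ((b₁ / x) ^ 2 * (1 / (b₂ * y)) ^ 2) =
      -(Qii2 b₁ b₂ Complex.I x y / (x ^ 2 * y ^ 2)) := by
  have hI : Complex.I ^ 2 = -1 := Complex.I_sq
  have hxi : x * x⁻¹ = 1 := mul_inv_cancel₀ hx
  have hyi : y * y⁻¹ = 1 := mul_inv_cancel₀ hy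
  have hbi : b₂ * b₂⁻¹ = 1 := mul_inv_cancel₀ hb₂
  have h1 : (b₁ / x) ^ 2 * (1 / (b₂ * y)) ^ 2 ≠ 0 := by
    apply mul_ne_zero <;> apply pow_ne_zero
    · exact div_ne_zero hb₁ hx
    · exact div_ne_zero one_ne_zero (mul_ne_zero hb₂ hy)
  have h2 : x ^ 2 * y ^ 2 ≠ 0 :=
    mul_ne_zero (pow_ne_zero _ hx) (pow_ne_zero _ hy)
  rw [← neg_div, div_eq_div_iff h1 h2]
  have e1 : b₁ / x = b₁ * x⁻¹ := div_eq_mul_inv b₁ x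
  have e2 : (1 : ℂ) / (b₂ * y) = b₂⁻¹ * y⁻¹ := by
    rw [one_div, mul_inv, mul_comm]
  rw [e1, e2]
  unfold Qii2
  linear_combination ((-2 : ℂ) * b₁ ^ 2 * x ^ 2 * y⁻¹ * b₂⁻¹ ^ 2 * Complex.I ^ 2 + (1 : ℂ) * b₁ ^ 2 * x ^ 2 * y⁻¹ ^ 2 * b₂⁻¹ ^ 2 * Complex.I ^ 2 + (1 : ℂ) * b₁ ^ 2 * x ^ 2 * y * y⁻¹ * b₂⁻¹ ^ 2 * Complex.I ^ 2 + (1 : ℂ) * b₁ ^ 2 * x ^ 3 * x⁻¹ * y⁻¹ ^ 2 * b₂⁻¹ ^ 2 * Complex.I ^ 2 + (-2 : ℂ) * b₁ ^ 2 * x ^ 3 * y * x⁻¹ * y⁻¹ ^ 2 * b₂⁻¹ ^ 2 * Complex.I ^ 2 + (1 : ℂ) * b₁ ^ 2 * x ^ 3 * y ^ 2 * x⁻¹ * y⁻¹ ^ 2 * b₂⁻¹ ^ 2 * Complex.I ^ 2 + (2 : ℂ) * b₁ ^ 3 * y⁻¹ * b₂⁻¹ ^ 2 * Complex.I + (2 :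 ℂ) * b₁ ^ 3 * y * b₂⁻¹ * Complex.I + (-2 : ℂ) * b₁ ^ 3 * y * y⁻¹ ^ 2 * b₂⁻¹ ^ 2 * Complex.I + (-2 : ℂ) * b₁ ^ 3 * y ^ 2 * y⁻¹ * b₂⁻¹ * Complex.I + (2 : ℂ) * b₁ ^ 3 * x * y⁻¹ * b₂⁻¹ ^ 2 * Complex.I ^ 2 + (-2 : ℂ) * b₁ ^ 3 * x * y⁻¹ ^ 2 * b₂⁻¹ ^ 2 * Complex.I ^ 2 + (-2 : ℂ) * b₁ ^ 3 * x * y * y⁻¹ * b₂⁻¹ * Complex.I + (2 : ℂ) * b₁ ^ 3 * x * y * x⁻¹ * y⁻¹ ^ 2 * b₂⁻¹ ^ 2 * Complex.I + (0 : ℂ) * b₁ ^ 3 * x * y ^ 2 * y⁻¹ * b₂⁻¹ * Complex.I + (2 : ℂ) * b₁ ^ 3 * x * y ^ 2 * x⁻¹ * y⁻¹ * b₂⁻¹ * Complex.I + (-2 : ℂ) * b₁ ^ 3 * x ^ 2 * x⁻¹ * y⁻¹ ^ 2 * b₂⁻¹ ^ 2 * Complex.I ^ 2 + (2 : ℂ)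 * b₁ ^ 3 * x ^ 2 * y * x⁻¹ * y⁻¹ ^ 2 * b₂⁻¹ ^ 2 * Complex.I ^ 2 + (2 : ℂ) * b₁ ^ 3 * b₂ * x * y ^ 2 * y⁻¹ ^ 2 * b₂⁻¹ ^ 2 * Complex.I + (2 : ℂ) * b₁ ^ 3 * b₂ * x * y ^ 2 * y⁻¹ ^ 3 * b₂⁻¹ ^ 3 + (-2 : ℂ) * b₁ ^ 3 * b₂ * x * y ^ 2 * x⁻¹ * y⁻¹ ^ 3 * b₂⁻¹ ^ 3 * Complex.I + (-2 : ℂ) * b₁ ^ 3 * b₂ * x * y ^ 3 * x⁻¹ * y⁻¹ ^ 2 * b₂⁻¹ ^ 2 * Complex.I + (-2 : ℂ) * b₁ ^ 3 * b₂ * x ^ 2 * y ^ 2 * x⁻¹ * y⁻¹ ^ 2 * b₂⁻¹ ^ 2 * Complex.I + (2 : ℂ) * b₁ ^ 3 * b₂ * x ^ 2 * y ^ 3 * x⁻¹ * y⁻¹ ^ 2 * b₂⁻¹ ^ 2 * Complex.I + (-2 : ℂ) * b₁ ^ 3 * b₂ ^ 2 * x * y ^ 2 * y⁻¹ ^ 4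 * b₂⁻¹ ^ 4 + (1 : ℂ) * b₁ ^ 4 * y⁻¹ ^ 2 * b₂⁻¹ ^ 2 * Complex.I ^ 2 + (2 : ℂ) * b₁ ^ 4 * y * x⁻¹ * b₂⁻¹ * Complex.I ^ 2 + (0 : ℂ) * b₁ ^ 4 * y * x⁻¹ * y⁻¹ ^ 2 * b₂⁻¹ ^ 2 * Complex.I + (-2 : ℂ) * b₁ ^ 4 * y * x⁻¹ ^ 2 * b₂⁻¹ * Complex.I ^ 2 + (1 : ℂ) * b₁ ^ 4 * y * x⁻¹ ^ 2 * y⁻¹ * b₂⁻¹ ^ 2 * Complex.I ^ 2 + (1 : ℂ) * b₁ ^ 4 * y ^ 2 * Complex.I ^ 2 + (-2 : ℂ) * b₁ ^ 4 * y ^ 2 * x⁻¹ * Complex.I ^ 2 + (1 : ℂ) * b₁ ^ 4 * y ^ 2 * x⁻¹ ^ 2 * Complex.I ^ 2 + (1 : ℂ) * b₁ ^ 4 * x * x⁻¹ * y⁻¹ ^ 2 * b₂⁻¹ ^ 2 * Complex.I ^ 2 + (1 : ℂ) * b₁ ^ 4 * x * y ^ 2 * x⁻¹ * Complex.I ^ 2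 + (-2 : ℂ) * b₁ ^ 4 * x * y ^ 2 * x⁻¹ ^ 2 * Complex.I ^ 2 + (2 : ℂ) * b₁ ^ 4 * x * y ^ 2 * x⁻¹ ^ 2 * y⁻¹ * b₂⁻¹ * Complex.I ^ 2 + (1 : ℂ) * b₁ ^ 4 * x * y ^ 2 * x⁻¹ ^ 3 * Complex.I ^ 2 + (-2 : ℂ) * b₁ ^ 4 * x * y ^ 2 * x⁻¹ ^ 3 * y⁻¹ * b₂⁻¹ * Complex.I ^ 2 + (1 : ℂ) * b₁ ^ 4 * x * y ^ 2 * x⁻¹ ^ 3 * y⁻¹ ^ 2 * b₂⁻¹ ^ 2 * Complex.I ^ 2 + (1 : ℂ) * b₁ ^ 4 * b₂ * y * y⁻¹ ^ 3 * b₂⁻¹ ^ 3 + (1 : ℂ) * b₁ ^ 4 * b₂ * y ^ 3 * y⁻¹ * b₂⁻¹ + (2 : ℂ) * b₁ ^ 4 * b₂ * y ^ 3 * x⁻¹ * y⁻¹ ^ 2 * b₂⁻¹ ^ 2 + (-2 : ℂ) * b₁ ^ 4 * b₂ * x * y ^ 2 * x⁻¹ ^ 2 * y⁻¹ ^ 2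 * b₂⁻¹ ^ 2 * Complex.I + (2 : ℂ) * b₁ ^ 4 * b₂ * x * y ^ 2 * x⁻¹ ^ 2 * y⁻¹ ^ 3 * b₂⁻¹ ^ 3 * Complex.I + (-2 : ℂ) * b₁ ^ 4 * b₂ ^ 2 * y ^ 4 * x⁻¹ * y⁻¹ ^ 2 * b₂⁻¹ ^ 2 + (1 : ℂ) * b₁ ^ 4 * b₂ ^ 2 * x * y ^ 2 * x⁻¹ * y⁻¹ ^ 4 * b₂⁻¹ ^ 4 + (1 : ℂ) * b₁ ^ 4 * b₂ ^ 2 * x * y ^ 4 * x⁻¹ * y⁻¹ ^ 2 * b₂⁻¹ ^ 2) * hxi + ((1 : ℂ) * b₁ ^ 2 * x ^ 2 * b₂⁻¹ ^ 2 + (1 : ℂ) * b₁ ^ 2 * x ^ 2 * b₂⁻¹ ^ 2 * Complex.I ^ 2 + (-2 : ℂ) * b₁ ^ 2 * x ^ 2 * y⁻¹ * b₂⁻¹ ^ 2 + (1 : ℂ) * b₁ ^ 2 * x ^ 2 * y * y⁻¹ * b₂⁻¹ ^ 2 + (-2 : ℂ) * b₁ ^ 2 * x ^ 3 * x⁻¹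 * y⁻¹ * b₂⁻¹ ^ 2 * Complex.I ^ 2 + (1 : ℂ) * b₁ ^ 2 * x ^ 3 * y * x⁻¹ * y⁻¹ * b₂⁻¹ ^ 2 * Complex.I ^ 2 + (1 : ℂ) * b₁ ^ 2 * b₂ * x ^ 2 * y⁻¹ ^ 2 * b₂⁻¹ ^ 3 + (-2 : ℂ) * b₁ ^ 2 * b₂ * x ^ 2 * y * y⁻¹ ^ 2 * b₂⁻¹ ^ 3 + (1 : ℂ) * b₁ ^ 2 * b₂ ^ 2 * x ^ 2 * y * y⁻¹ ^ 3 * b₂⁻¹ ^ 4 + (-2 : ℂ) * b₁ ^ 3 * y⁻¹ * b₂⁻¹ ^ 2 * Complex.I + (-2 : ℂ) * b₁ ^ 3 * y * b₂⁻¹ * Complex.I + (2 : ℂ) * b₁ ^ 3 * x * y⁻¹ * b₂⁻¹ ^ 2 + (2 : ℂ) * b₁ ^ 3 * x * x⁻¹ * y⁻¹ * b₂⁻¹ ^ 2 * Complex.I + (0 : ℂ) * b₁ ^ 3 * x * y * b₂⁻¹ * Complex.I + (2 : ℂ) * b₁ ^ 3 * x * y * x⁻¹ * b₂⁻¹ *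 Complex.I + (2 : ℂ) * b₁ ^ 3 * x ^ 2 * x⁻¹ * y⁻¹ * b₂⁻¹ ^ 2 * Complex.I ^ 2 + (-2 : ℂ) * b₁ ^ 3 * b₂ * x * y⁻¹ ^ 2 * b₂⁻¹ ^ 3 + (2 : ℂ) * b₁ ^ 3 * b₂ * x * y * y⁻¹ * b₂⁻¹ ^ 2 * Complex.I + (2 : ℂ) * b₁ ^ 3 * b₂ * x * y * y⁻¹ ^ 2 * b₂⁻¹ ^ 3 + (-2 : ℂ) * b₁ ^ 3 * b₂ * x * y * x⁻¹ * y⁻¹ ^ 2 * b₂⁻¹ ^ 3 * Complex.I + (-2 : ℂ) * b₁ ^ 3 * b₂ * x * y ^ 2 * x⁻¹ * y⁻¹ * b₂⁻¹ ^ 2 * Complex.I + (-2 : ℂ) * b₁ ^ 3 * b₂ * x ^ 2 * y * x⁻¹ * y⁻¹ * b₂⁻¹ ^ 2 * Complex.I + (2 : ℂ) * b₁ ^ 3 * b₂ * x ^ 2 * y ^ 2 * x⁻¹ * y⁻¹ * b₂⁻¹ ^ 2 * Complex.I + (-2 : ℂ) * b₁ ^ 3 * b₂ ^ 2 * x * y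 * y⁻¹ ^ 3 * b₂⁻¹ ^ 4 + (0 : ℂ) * b₁ ^ 4 * x⁻¹ * y⁻¹ * b₂⁻¹ ^ 2 * Complex.I + (1 : ℂ) * b₁ ^ 4 * x⁻¹ ^ 2 * b₂⁻¹ ^ 2 + (1 : ℂ) * b₁ ^ 4 * x⁻¹ ^ 2 * b₂⁻¹ ^ 2 * Complex.I ^ 2 + (2 : ℂ) * b₁ ^ 4 * y * x⁻¹ * b₂⁻¹ + (-2 : ℂ) * b₁ ^ 4 * y * x⁻¹ ^ 2 * b₂⁻¹ + (1 : ℂ) * b₁ ^ 4 * y * x⁻¹ ^ 2 * y⁻¹ * b₂⁻¹ ^ 2 + (2 : ℂ) * b₁ ^ 4 * x * y * x⁻¹ ^ 2 * b₂⁻¹ * Complex.I ^ 2 + (-2 : ℂ) * b₁ ^ 4 * x * y * x⁻¹ ^ 3 * b₂⁻¹ * Complex.I ^ 2 + (1 : ℂ) * b₁ ^ 4 * x * y * x⁻¹ ^ 3 * y⁻¹ * b₂⁻¹ ^ 2 * Complex.I ^ 2 + (1 : ℂ) * b₁ ^ 4 * b₂ * y⁻¹ ^ 2 * b₂⁻¹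 ^ 3 + (1 : ℂ) * b₁ ^ 4 * b₂ * y ^ 2 * b₂⁻¹ + (-2 : ℂ) * b₁ ^ 4 * b₂ * y ^ 2 * x⁻¹ * b₂⁻¹ + (2 : ℂ) * b₁ ^ 4 * b₂ * y ^ 2 * x⁻¹ * y⁻¹ * b₂⁻¹ ^ 2 + (1 : ℂ) * b₁ ^ 4 * b₂ * y ^ 2 * x⁻¹ ^ 2 * b₂⁻¹ + (-2 : ℂ) * b₁ ^ 4 * b₂ * y ^ 2 * x⁻¹ ^ 2 * y⁻¹ * b₂⁻¹ ^ 2 + (2 : ℂ) * b₁ ^ 4 * b₂ * x * y * x⁻¹ ^ 2 * y⁻¹ ^ 2 * b₂⁻¹ ^ 3 * Complex.I + (-2 : ℂ) * b₁ ^ 4 * b₂ ^ 2 * y ^ 3 * x⁻¹ * y⁻¹ * b₂⁻¹ ^ 2 + (1 : ℂ) * b₁ ^ 4 * b₂ ^ 2 * y ^ 3 * x⁻¹ ^ 2 * y⁻¹ * b₂⁻¹ ^ 2 + (1 : ℂ) * b₁ ^ 4 * b₂ ^ 2 * x * y * x⁻¹ * y⁻¹ ^ 3 * b₂⁻¹ ^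 4 + (1 : ℂ) * b₁ ^ 4 * b₂ ^ 2 * x * y ^ 3 * x⁻¹ * y⁻¹ * b₂⁻¹ ^ 2) * hyi + ((1 : ℂ) * b₁ ^ 2 * x ^ 2 * y⁻¹ ^ 2 * b₂⁻¹ ^ 2 + (-2 : ℂ) * b₁ ^ 2 * x ^ 2 * y * y⁻¹ ^ 2 * b₂⁻¹ ^ 2 + (1 : ℂ) * b₁ ^ 2 * b₂ * x ^ 2 * y * y⁻¹ ^ 3 * b₂⁻¹ ^ 3 + (-2 : ℂ) * b₁ ^ 3 * x * y⁻¹ ^ 2 * b₂⁻¹ ^ 2 + (2 : ℂ) * b₁ ^ 3 * x * y * y⁻¹ * b₂⁻¹ * Complex.I + (2 : ℂ) * b₁ ^ 3 * x * y * y⁻¹ ^ 2 * b₂⁻¹ ^ 2 + (-2 : ℂ) * b₁ ^ 3 * x * y * x⁻¹ * y⁻¹ ^ 2 * b₂⁻¹ ^ 2 * Complex.I + (-2 : ℂ) * b₁ ^ 3 * x * y ^ 2 * x⁻¹ * y⁻¹ * b₂⁻¹ * Complex.I + (-2 : ℂ) * b₁ ^ 3 * x ^ 2 * y * x⁻¹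 * y⁻¹ * b₂⁻¹ * Complex.I + (2 : ℂ) * b₁ ^ 3 * x ^ 2 * y ^ 2 * x⁻¹ * y⁻¹ * b₂⁻¹ * Complex.I + (-2 : ℂ) * b₁ ^ 3 * b₂ * x * y * y⁻¹ ^ 3 * b₂⁻¹ ^ 3 + (1 : ℂ) * b₁ ^ 4 * y⁻¹ ^ 2 * b₂⁻¹ ^ 2 + (1 : ℂ) * b₁ ^ 4 * y ^ 2 + (-2 : ℂ) * b₁ ^ 4 * y ^ 2 * x⁻¹ + (2 : ℂ) * b₁ ^ 4 * y ^ 2 * x⁻¹ * y⁻¹ * b₂⁻¹ + (1 : ℂ) * b₁ ^ 4 * y ^ 2 * x⁻¹ ^ 2 + (-2 : ℂ) * b₁ ^ 4 * y ^ 2 * x⁻¹ ^ 2 * y⁻¹ * b₂⁻¹ + (2 : ℂ) * b₁ ^ 4 * x * y * x⁻¹ ^ 2 * y⁻¹ ^ 2 * b₂⁻¹ ^ 2 * Complex.I + (-2 : ℂ) * b₁ ^ 4 * b₂ * y ^ 3 * x⁻¹ * y⁻¹ * b₂⁻¹ + (1 : ℂ) * b₁ ^ 4 * b₂ * y ^ 3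 * x⁻¹ ^ 2 * y⁻¹ * b₂⁻¹ + (1 : ℂ) * b₁ ^ 4 * b₂ * x * y * x⁻¹ * y⁻¹ ^ 3 * b₂⁻¹ ^ 3 + (1 : ℂ) * b₁ ^ 4 * b₂ * x * y ^ 3 * x⁻¹ * y⁻¹ * b₂⁻¹) * hbi + ((1 : ℂ) * b₁ ^ 2 * x ^ 2 * b₂⁻¹ ^ 2 + (-2 : ℂ) * b₁ ^ 2 * x ^ 2 * y⁻¹ * b₂⁻¹ ^ 2 + (1 : ℂ) * b₁ ^ 2 * x ^ 2 * y⁻¹ ^ 2 * b₂⁻¹ ^ 2 + (2 : ℂ) * b₁ ^ 3 * x * y⁻¹ * b₂⁻¹ ^ 2 + (-2 : ℂ) * b₁ ^ 3 * x * y⁻¹ ^ 2 * b₂⁻¹ ^ 2 + (1 : ℂ) * b₁ ^ 4 * y⁻¹ ^ 2 * b₂⁻¹ ^ 2 + (1 : ℂ) * b₁ ^ 4 * x⁻¹ ^ 2 * b₂⁻¹ ^ 2 + (2 : ℂ) * b₁ ^ 4 * y * x⁻¹ * b₂⁻¹ + (-2 : ℂ) * b₁ ^ 4 * y * x⁻¹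 ^ 2 * b₂⁻¹ + (1 : ℂ) * b₁ ^ 4 * y ^ 2 + (-2 : ℂ) * b₁ ^ 4 * y ^ 2 * x⁻¹ + (1 : ℂ) * b₁ ^ 4 * y ^ 2 * x⁻¹ ^ 2) * hI
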